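/- Let P_opt = min{ tr(R) : R ⪰ 0, log det(I + H R Hᴴ) ≥ γ } be attained at R_opt (γ > 0, H ≠ 0). Then R_opt also solves max{ log det(I + H R Hᴴ) : R ⪰ 0, tr(R) ≤ P_opt }, the optimal value of the latter problem equals γ, and the QoS constraint holds with equality at R_opt. -/

import Mathlib

/-!
If a PSD `R` with `tr R ≤ tr R_opt` had rate above `γ`, then `R ≠ 0` (the zero matrix has rate
`0 ≤ γ`), and by continuity of the rate along the ray `t ↦ t • R` some `t • R` with `t < 1` would
still meet the QoS constraint while having trace `t · tr R < tr R_opt`, contradicting minimality.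
Applied to `R_opt` itself this gives rate `≤ γ`, hence equality.
-/

open Matrix ComplexOrder Filter Set Topology

lemma Matrix.PosSemidef.trace_re_pos {n : Type*} [Fintype n] {S : Matrix n n ℂ}
    (hS : S.PosSemidef) (hne : S ≠ 0) : 0 < S.trace.re := by
  obtain ⟨hre, him⟩ := Complex.nonneg_iff.mp hS.trace_nonneg
  refine hre.lt_of_ne fun h => hne (hS.trace_eq_zero_iff.mp ?_)
  exact Complex.ext h.symm him.symm

lemma exists_mem_Ioo_lt_of_continuousAt_one {f : ℝ → ℝ} {γ : ℝ} (hf : ContinuousAt f 1)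
    (h : γ < f 1) : ∃ t ∈ Ioo (0 : ℝ) 1, γ < f t := by
  have hlt : ∀ᶠ t in 𝓝[<] (1 : ℝ), γ < f t :=
    nhdsWithin_le_nhds (hf.eventually (lt_mem_nhds h))
  exact (Filter.Eventually.and (Ioo_mem_nhdsLT zero_lt_one) hlt).exists

lemma continuousAt_log_det_re_one_add_smul {n : Type*} [Fintype n] [DecidableEq n]
    (A : Matrix n n ℂ) (h : (1 + A).det.re ≠ 0) :
    ContinuousAt (fun t : ℝ => Real.log (1 + t • A).det.re) 1 := by
  have hdet : Continuous fun t : ℝ => (1 + t • A).det.re :=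
    Complex.continuous_re.comp
      (continuous_const.add (continuous_id.smul continuous_const)).matrix_det
  exact hdet.continuousAt.log (by simpa using h)

lemma log_det_le_of_trace_le_of_min_trace {d m : Type*} [Fintype d] [DecidableEq d] [Fintype m]
    (H : Matrix d m ℂ) {γ : ℝ} (hγ : 0 ≤ γ) (Ropt : Matrix m m ℂ)
    (hmin : ∀ R : Matrix m m ℂ, R.PosSemidef →
      γ ≤ Real.log ((1 + H * R * Hᴴ).det.re) → Ropt.trace.re ≤ R.trace.re)
    {R : Matrix m m ℂ} (hR : R.PosSemidef) (htr : R.trace.re ≤ Ropt.trace.re) :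
    Real.log ((1 + H * R * Hᴴ).det.re) ≤ γ := by
  by_contra! hlt
  have hRne : R ≠ 0 := by
    rintro rfl
    simp at hlt
    linarith
  have hdet : (1 + H * R * Hᴴ).det.re ≠ 0 := by
    intro h0
    rw [h0, Real.log_zero] at hlt
    linarith
  obtain ⟨t, ⟨ht0, ht1⟩, hrate⟩ := exists_mem_Ioo_lt_of_continuousAt_one
    (continuousAt_log_det_re_one_add_smul _ hdet) (by rwa [one_smul])
  have hscaled := hmin (t • R) (hR.smul ht0.le)
    (by simpa [Matrix.mul_smul, Matrix.smul_mul] using hrate.le)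
  rw [trace_smul, Complex.real_smul, Complex.re_ofReal_mul] at hscaled
  nlinarith [hR.trace_re_pos hRne]

theorem power_min_rate_max_duality_general {d m : ℕ}
    (H : Matrix (Fin d) (Fin m) ℂ) (γ : ℝ) (hγ : 0 < γ)
    (Ropt : Matrix (Fin m) (Fin m) ℂ) (hRopt : Ropt.PosSemidef)
    (hfeas : γ ≤ Real.log ((1 + H * Ropt * Hᴴ).det.re))
    (hmin : ∀ R : Matrix (Fin m) (Fin m) ℂ, R.PosSemidef →
      γ ≤ Real.log ((1 + H * R * Hᴴ).det.re) → Ropt.trace.re ≤ R.trace.re) :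
    (∀ R : Matrix (Fin m) (Fin m) ℂ, R.PosSemidef →
      R.trace.re ≤ Ropt.trace.re →
      Real.log ((1 + H * R * Hᴴ).det.re) ≤ γ) ∧
    Real.log ((1 + H * Ropt * Hᴴ).det.re) = γ :=
  have hle := fun _ hR htr => log_det_le_of_trace_le_of_min_trace H hγ.le Ropt hmin hR htr
  ⟨hle, le_antisymm (hle Ropt hRopt le_rfl) hfeas⟩

/-- Duality between power minimization under a QoS (rate) constraint and rate
maximization under the resulting power constraint: if `R_opt` minimizes `tr R`
among PSD `R` with `log det(I + H R Hᴴ) ≥ γ`, then `R_opt` maximizes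
`log det(I + H R Hᴴ)` among PSD `R` with `tr R ≤ tr R_opt`, the optimal value
equals `γ`, and the QoS constraint is tight at `R_opt`. -/
theorem power_min_rate_max_duality {d m : ℕ}
    (H : Matrix (Fin d) (Fin m) ℂ) (hH : H ≠ 0) (γ : ℝ) (hγ : 0 < γ)
    (Ropt : Matrix (Fin m) (Fin m) ℂ) (hRopt : Ropt.PosSemidef)
    (hfeas : γ ≤ Real.log ((1 + H * Ropt * Hᴴ).det.re))
    (hmin : ∀ R : Matrix (Fin m) (Fin m) ℂ, R.PosSemidef →
      γ ≤ Real.log ((1 + H * R * Hᴴ).det.re) → Ropt.trace.re ≤ R.trace.re) :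
    (∀ R : Matrix (Fin m) (Fin m) ℂ, R.PosSemidef →
      R.trace.re ≤ Ropt.trace.re →
      Real.log ((1 + H * R * Hᴴ).det.re) ≤ γ) ∧
    Real.log ((1 + H * Ropt * Hᴴ).det.re) = γ :=
  power_min_rate_max_duality_general H γ hγ Ropt hRopt hfeas hmin
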